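/- arXiv:1209.3430 — 2 statements merged into one kernel-verified Lean document; each statement's English description precedes it below -/
import Mathlib

section
/- Let ε = (ε¹₁,ε¹₂,ε²₁,ε²₂) ∈ [0,1/2]⁴. Then the following are equivalent: (a) for every p ∈ [0,1/2]⁴ satisfying max S₁p ≤ √2/2, (p, ε) ∈ ELFP; (b) max S₀ε ≤ (3 − √2)/2 and max S₁ε ≤ 1/2. (This characterizes the set Fit for the quantum ('quant') constraint.) -/
open Finset

/-- The signed sum `±(x₁₁−¼) ± (x₁₂−¼) ± (x₂₁−¼) ± (x₂₂−¼)` over the four components of `x`,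
with a `+` sign exactly where the sign choice `s` is `true`. -/
noncomputable def Sval (x : Fin 2 → Fin 2 → ℝ) (s : Fin 2 → Fin 2 → Bool) : ℝ :=
  ∑ i : Fin 2, ∑ j : Fin 2, (if s i j then (1 : ℝ) else -1) * (x i j - 1 / 4)

/-- The number of `+` signs in a sign choice. -/
def plusCount (s : Fin 2 → Fin 2 → Bool) : ℕ :=
  (Finset.univ.filter fun ij : Fin 2 × Fin 2 => s ij.1 ij.2 = true).card

/-- `max Sx`: the maximum of the signed sums over all 16 sign choices. -/
noncomputable def maxS (x : Fin 2 → Fin 2 → ℝ) : ℝ :=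
  Finset.univ.sup' Finset.univ_nonempty (Sval x)

/-- `max S₀x`: the maximum over sign choices with an even number of `+` signs. -/
noncomputable def maxS0 (x : Fin 2 → Fin 2 → ℝ) : ℝ :=
  (Finset.univ.filter fun s : Fin 2 → Fin 2 → Bool => Even (plusCount s)).sup'
    ⟨fun _ _ => false, by decide⟩ (Sval x)

/-- `max S₁x`: the maximum over sign choices with an odd number of `+` signs. -/
noncomputable def maxS1 (x : Fin 2 → Fin 2 → ℝ) : ℝ :=
  (Finset.univ.filter fun s : Fin 2 → Fin 2 → Bool => ¬ Even (plusCount s)).sup'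
    ⟨fun i j => i == 0 && j == 0, by decide⟩ (Sval x)

/-- `r ∈ S₀x`: `r` is one of the signed sums with an even number of `+` signs. -/
def memS0 (x : Fin 2 → Fin 2 → ℝ) (r : ℝ) : Prop :=
  ∃ s : Fin 2 → Fin 2 → Bool, Even (plusCount s) ∧ Sval x s = r

/-- The Extended Linear Feasibility Polytope: `(p, ε) ∈ ELFP` iff there is a joint
distribution on `({−1,+1})⁸` — encoded as `Fin 2 → Fin 2 → Fin 2 → Bool`, `h k i j` being the
value of `Hᵏᵢⱼ` (`true` standing for `+1`) — with uniform ±1 one-dimensional marginals,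
`Pr[H¹ᵢⱼ = +1, H²ᵢⱼ = +1] = p i j`, `Pr[H¹ᵢ₁ = +1, H¹ᵢ₂ = +1] = ε 0 i`, and
`Pr[H²₁ⱼ = +1, H²₂ⱼ = +1] = ε 1 j`. -/
def ELFP (p ε : Fin 2 → Fin 2 → ℝ) : Prop :=
  ∃ μ : (Fin 2 → Fin 2 → Fin 2 → Bool) → ℝ,
    (∀ h, 0 ≤ μ h) ∧
    (∑ h : Fin 2 → Fin 2 → Fin 2 → Bool, μ h = 1) ∧
    (∀ k i j : Fin 2,
      ∑ h ∈ Finset.univ.filter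
          (fun h : Fin 2 → Fin 2 → Fin 2 → Bool => h k i j = true), μ h = 1 / 2) ∧
    (∀ i j : Fin 2,
      ∑ h ∈ Finset.univ.filter
          (fun h : Fin 2 → Fin 2 → Fin 2 → Bool => h 0 i j = true ∧ h 1 i j = true), μ h
        = p i j) ∧
    (∀ i : Fin 2,
      ∑ h ∈ Finset.univ.filter
          (fun h : Fin 2 → Fin 2 → Fin 2 → Bool => h 0 i 0 = true ∧ h 0 i 1 = true), μ h
        = ε 0 i) ∧
    (∀ j : Fin 2,
      ∑ h ∈ Finset.univ.filter
          (fun h : Fin 2 → Fin 2 → Fin 2 → Bool => h 1 0 j = true ∧ h 1 1 j = true), μ h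
        = ε 1 j)

/-!
The eight variables `Hᵏᵢⱼ` and the eight pair constraints of `ELFP` form a single 8-cycle. Under
uniform marginals, `Pr[H = H' = +1] = q` says `Pr[H = H'] = 2q`; along a cycle every configuration
agrees on an even number of edges, and every even agreement pattern is realised by a configuration
and by its global flip. So `(p, ε) ∈ ELFP` iff the vector `2q` of agreement probabilities lies in
the parity polytope, the convex hull of the even vertices of the cube, which inside the cube is cut
out by the odd-set inequalities. On the cycle these read `Sval p s + Sval ε t ≤ 3/2` for sign
choices `s`, `t` of opposite parity. Then (b) ⇒ (a) is the sum of the bounds on `S₁p` and `S₀ε` (or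
of the trivial bound `Sval p s ≤ 1` and the bound on `S₁ε`), and (a) ⇒ (b) tests the inequalities
against the Tsirelson point `p = ¼ ± √2/8` and against `p = 0`.
-/

section ParityPolytope

variable {ι : Type*} [Fintype ι]

def cubeVertex (b : ι → Bool) : ι → ℝ := fun e => if b e then 1 else 0

def vertexDist (b : ι → Bool) (d : ι → ℝ) : ℝ := ∑ e, if b e then 1 - d e else d e

variable (ι) in
def parityPolytope : Set (ι → ℝ) := convexHull ℝ (cubeVertex '' {b | Even #{e | b e = true}})

lemma even_card_update_not_iff [DecidableEq ι] (b : ι → Bool) (i : ι) :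
    Even #{e | Function.update b i (!b i) e = true} ↔ ¬Even #{e | b e = true} := by
  have split (c : ι → Bool) : #{e | c e = true} =
      ∑ e ∈ univ.erase i, (if c e = true then 1 else 0) + if c i then 1 else 0 := by
    rw [card_filter, sum_erase_add _ _ (mem_univ i)]
  rw [split, split b, sum_congr rfl fun e he => by rw [Function.update_of_ne (ne_of_mem_erase he)]]
  cases b i <;> simp [Nat.even_add_one]

lemma one_le_vertexDist_cubeVertex {b c : ι → Bool} (hb : ¬Even #{e | b e = true})
    (hc : Even #{e | c e = true}) : 1 ≤ vertexDist b (cubeVertex c) := by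
  obtain ⟨e, he⟩ : ∃ e, b e ≠ c e := by
    by_contra! h
    exact hb (funext h ▸ hc)
  calc (1 : ℝ) = if b e then 1 - cubeVertex c e else cubeVertex c e := by
        cases hbe : b e <;> cases hce : c e <;> simp_all [cubeVertex]
    _ ≤ vertexDist b (cubeVertex c) :=
        single_le_sum (f := fun e => if b e then 1 - cubeVertex c e else cubeVertex c e)
          (fun e _ => by simp only [cubeVertex]; split_ifs <;> norm_num) (mem_univ e)

lemma vertexDist_cubeVertex_self (b : ι → Bool) :
    vertexDist b (cubeVertex b) = 0 :=
  sum_eq_zero fun e _ => by simp only [cubeVertex]; cases b e <;> simp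

lemma convex_setOf_one_le_vertexDist (b : ι → Bool) : Convex ℝ {d | 1 ≤ vertexDist b d} := by
  intro x hx y hy a c ha hc hac
  have affine : vertexDist b (a • x + c • y) = a * vertexDist b x + c * vertexDist b y := by
    simp only [vertexDist, mul_sum, ← sum_add_distrib]
    refine sum_congr rfl fun e _ => ?_
    split_ifs
    · simp only [Pi.add_apply, Pi.smul_apply, smul_eq_mul]
      linear_combination -hac
    · simp only [Pi.add_apply, Pi.smul_apply, smul_eq_mul]
  change 1 ≤ vertexDist b x at hx
  change 1 ≤ vertexDist b y at hy
  change 1 ≤ vertexDist b (a • x + c • y)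
  nlinarith

/-- The linear functional `σ` is maximised over the cube at the sign pattern of `σ`; if that
vertex is odd, flipping its cheapest coordinate costs `min |σ|`, which the odd-set inequality
at that vertex pays for. -/
lemma exists_even_cubeVertex_ge {d : ι → ℝ} (hbox : ∀ e, d e ∈ Set.Icc 0 1)
    (hodd : ∀ b, ¬Even #{e | b e = true} → 1 ≤ vertexDist b d) (σ : ι → ℝ) :
    ∃ b, Even #{e | b e = true} ∧ ∑ e, d e * σ e ≤ ∑ e, cubeVertex b e * σ e := by
  classical
  set b₀ : ι → Bool := fun e => decide (0 < σ e)
  set slack : ι → ℝ := fun e => if b₀ e then 1 - d e else d e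
  have slack_nonneg (e : ι) : 0 ≤ slack e := by
    simp only [slack]; split_ifs <;> linarith [(hbox e).1, (hbox e).2]
  have gap : ∑ e, cubeVertex b₀ e * σ e - ∑ e, d e * σ e = ∑ e, |σ e| * slack e := by
    rw [← sum_sub_distrib]
    refine sum_congr rfl fun e _ => ?_
    by_cases h : 0 < σ e
    · simp only [slack, b₀, cubeVertex, h, decide_true, if_true, abs_of_pos h]
      ring
    · simp only [slack, b₀, cubeVertex, h, decide_false, Bool.false_eq_true, if_false,
        abs_of_nonpos (not_lt.1 h)]
      ring
  by_cases heven : Even #{e | b₀ e = true}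
  · have : 0 ≤ ∑ e, |σ e| * slack e :=
      sum_nonneg fun e _ => mul_nonneg (abs_nonneg (σ e)) (slack_nonneg e)
    exact ⟨b₀, heven, by linarith⟩
  have : Nonempty ι := by
    obtain ⟨e, -⟩ := card_ne_zero.1 fun h => heven (h ▸ .zero)
    exact ⟨e⟩
  obtain ⟨i, -, hi⟩ := exists_min_image univ (fun e => |σ e|) univ_nonempty
  set b₁ := Function.update b₀ i (!b₀ i)
  have flip : ∑ e, cubeVertex b₁ e * σ e + |σ i| = ∑ e, cubeVertex b₀ e * σ e := by
    rw [← add_sum_erase _ _ (mem_univ i), ← add_sum_erase _ _ (mem_univ i), add_right_comm]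
    congr 1
    · by_cases h : 0 < σ i
      · simp [b₁, b₀, cubeVertex, h, abs_of_pos h]
      · simp [b₁, b₀, cubeVertex, h, abs_of_nonpos (not_lt.1 h)]
    · exact sum_congr rfl fun e he => by
        simp only [b₁, cubeVertex, Function.update_of_ne (ne_of_mem_erase he)]
  have cost : |σ i| ≤ ∑ e, |σ e| * slack e :=
    calc |σ i| ≤ |σ i| * vertexDist b₀ d := le_mul_of_one_le_right (abs_nonneg _) (hodd b₀ heven)
      _ = ∑ e, |σ i| * slack e := mul_sum _ _ _
      _ ≤ ∑ e, |σ e| * slack e :=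
        sum_le_sum fun e _ => mul_le_mul_of_nonneg_right (hi e (mem_univ e)) (slack_nonneg e)
  exact ⟨b₁, (even_card_update_not_iff b₀ i).2 heven, by linarith⟩

lemma one_le_vertexDist_of_mem_parityPolytope {d : ι → ℝ} (hd : d ∈ parityPolytope ι)
    {b : ι → Bool} (hb : ¬Even #{e | b e = true}) : 1 ≤ vertexDist b d := by
  refine convexHull_min ?_ (convex_setOf_one_le_vertexDist b) hd
  rintro _ ⟨c, hc, rfl⟩
  exact one_le_vertexDist_cubeVertex hb hc

theorem mem_parityPolytope_of_one_le_vertexDist {d : ι → ℝ} (hbox : ∀ e, d e ∈ Set.Icc 0 1)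
    (hodd : ∀ b, ¬Even #{e | b e = true} → 1 ≤ vertexDist b d) : d ∈ parityPolytope ι := by
  classical
  by_contra hd
  obtain ⟨f, u, hfu, hud⟩ := geometric_hahn_banach_closed_point (convex_convexHull ℝ _)
    ((Set.toFinite _).isClosed_convexHull (𝕜 := ℝ)) hd
  have hf (x : ι → ℝ) : f x = ∑ e, x e * f (fun e' => if e = e' then 1 else 0) :=
    LinearMap.pi_apply_eq_sum_univ f.toLinearMap x
  obtain ⟨b, hb, hle⟩ := exists_even_cubeVertex_ge hbox hodd _
  have := hfu _ (subset_convexHull ℝ _ ⟨b, hb, rfl⟩)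
  rw [hf] at this hud
  linarith

end ParityPolytope

lemma sum_filter_and_eq_half_sum_filter_beq {Ω : Type*} [Fintype Ω] {μ : Ω → ℝ}
    (hμ : ∑ ω, μ ω = 1) {A B : Ω → Bool} (hA : ∑ ω ∈ {ω | A ω = true}, μ ω = 1 / 2)
    (hB : ∑ ω ∈ {ω | B ω = true}, μ ω = 1 / 2) :
    ∑ ω ∈ {ω | A ω = true ∧ B ω = true}, μ ω = (∑ ω ∈ {ω | (A ω == B ω) = true}, μ ω) / 2 := by
  rw [sum_filter] at hA hB ⊢
  rw [sum_filter]
  have pointwise (ω : Ω) : (if A ω = true ∧ B ω = true then μ ω else 0) =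
      ((if (A ω == B ω) = true then μ ω else 0) - μ ω + (if A ω = true then μ ω else 0)
        + (if B ω = true then μ ω else 0)) / 2 := by
    cases A ω <;> cases B ω <;> simp
  rw [sum_congr rfl fun ω _ => pointwise ω, ← sum_div, sum_add_distrib, sum_add_distrib,
    sum_sub_distrib, hμ, hA, hB]
  ring

abbrev Config := Fin 2 → Fin 2 → Fin 2 → Bool

def Config.value (h : Config) (v : Fin 2 × Fin 2 × Fin 2) : Bool := h v.1 v.2.1 v.2.2

-- `(k, i, j)` stands for `H^(k+1)_(i+1)(j+1)`. The edge `inl (i, j)` joins `H¹ᵢⱼ` to `H²ᵢⱼ`, and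
-- `inr (k, i)` is the edge of `εᵏᵢ`; together they form the 8-cycle
-- (0,0,0) (0,0,1) (1,0,1) (1,1,1) (0,1,1) (0,1,0) (1,1,0) (1,0,0).
abbrev Edge := (Fin 2 × Fin 2) ⊕ (Fin 2 × Fin 2)

def Edge.fst : Edge → Fin 2 × Fin 2 × Fin 2
  | .inl (i, j) => (0, i, j)
  | .inr (k, i) => if k = 0 then (0, i, 0) else (1, 0, i)

def Edge.snd : Edge → Fin 2 × Fin 2 × Fin 2
  | .inl (i, j) => (1, i, j)
  | .inr (k, i) => if k = 0 then (0, i, 1) else (1, 1, i)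

def edgeProb (p ε : Fin 2 → Fin 2 → ℝ) : Edge → ℝ :=
  Sum.elim (Function.uncurry p) (Function.uncurry ε)

lemma elfp_iff_exists_edge (p ε : Fin 2 → Fin 2 → ℝ) :
    ELFP p ε ↔ ∃ μ : Config → ℝ, (∀ h, 0 ≤ μ h) ∧ ∑ h, μ h = 1 ∧
      (∀ v, ∑ h ∈ {h : Config | h.value v = true}, μ h = 1 / 2) ∧
      ∀ e : Edge, ∑ h ∈ {h : Config | h.value e.fst = true ∧ h.value e.snd = true}, μ h
        = edgeProb p ε e := by
  simp only [ELFP, Sum.forall, Prod.forall, Fin.forall_fin_two, Config.value, Edge.fst, Edge.snd,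
    edgeProb, Sum.elim_inl, Sum.elim_inr, Function.uncurry_apply_pair, Fin.isValue, one_ne_zero,
    if_true, if_false]
  rfl

def Config.agreement (h : Config) (e : Edge) : Bool := h.value e.fst == h.value e.snd

lemma Config.even_card_agreement (h : Config) : Even #{e | h.agreement e = true} := by
  revert h
  decide +kernel

-- Walk once around the cycle starting from `true`; the closing edge `inl (0, 0)` is consistent
-- exactly when `b` has an even number of disagreements, i.e. (eight edges) when `b` is even.
def Config.ofAgreement (b : Edge → Bool) : Config :=
  let x₁ := b (.inr (0, 0))
  let x₂ := x₁ == b (.inl (0, 1))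
  let x₃ := x₂ == b (.inr (1, 1))
  let x₄ := x₃ == b (.inl (1, 1))
  let x₅ := x₄ == b (.inr (0, 1))
  let x₆ := x₅ == b (.inl (1, 0))
  let x₇ := x₆ == b (.inr (1, 0))
  ![![![true, x₁], ![x₅, x₄]], ![![x₇, x₂], ![x₆, x₃]]]

lemma Config.agreement_ofAgreement {b : Edge → Bool} (hb : Even #{e | b e = true}) :
    (Config.ofAgreement b).agreement = b := by
  revert b
  decide +kernel

def Config.neg (h : Config) : Config := fun k i j => !h k i j

lemma Config.value_neg (h : Config) (v : Fin 2 × Fin 2 × Fin 2) : h.neg.value v = !h.value v :=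
  rfl

lemma Config.agreement_neg (h : Config) : h.neg.agreement = h.agreement := by
  funext e
  simp [agreement, value, neg]

-- Splitting each weight between a configuration and its global flip makes every marginal uniform.
noncomputable def symmetrizedMixture {κ : Type*} [Fintype κ] (w : κ → ℝ) (c : κ → Config)
    (h : Config) : ℝ :=
  ∑ k, w k / 2 * ((if c k = h then 1 else 0) + (if (c k).neg = h then 1 else 0))

lemma sum_symmetrizedMixture {κ : Type*} [Fintype κ] (w : κ → ℝ) (c : κ → Config)
    (s : Finset Config) : ∑ h ∈ s, symmetrizedMixture w c h =
      ∑ k, w k / 2 * ((if c k ∈ s then 1 else 0) + (if (c k).neg ∈ s then 1 else 0)) := by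
  simp only [symmetrizedMixture]
  rw [sum_comm]
  exact sum_congr rfl fun k _ => by rw [← mul_sum, sum_add_distrib, sum_ite_eq, sum_ite_eq]

lemma mem_parityPolytope_of_elfp {p ε : Fin 2 → Fin 2 → ℝ} (h : ELFP p ε) :
    (fun e => 2 * edgeProb p ε e) ∈ parityPolytope Edge := by
  obtain ⟨μ, hμ0, hμ1, hmarg, hedge⟩ := (elfp_iff_exists_edge p ε).1 h
  have hd : (fun e => 2 * edgeProb p ε e) = ∑ h, μ h • cubeVertex h.agreement := by
    funext e
    rw [← hedge, sum_filter_and_eq_half_sum_filter_beq hμ1 (hmarg _) (hmarg _), sum_filter]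
    simp [Finset.sum_apply, cubeVertex, Config.agreement, mul_div_cancel₀]
  rw [hd]
  exact (convex_convexHull ℝ _).sum_mem (fun h _ => hμ0 h) hμ1
    fun h _ => subset_convexHull ℝ _ ⟨_, h.even_card_agreement, rfl⟩

lemma elfp_of_mem_parityPolytope {p ε : Fin 2 → Fin 2 → ℝ}
    (hd : (fun e => 2 * edgeProb p ε e) ∈ parityPolytope Edge) : ELFP p ε := by
  obtain ⟨κ, _, w, z, hw0, hw1, hz, hwz⟩ := mem_convexHull_iff_exists_fintype.1 hd
  choose b hb hbz using hz
  set μ := symmetrizedMixture w fun k => Config.ofAgreement (b k)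
  have hμ1 : ∑ h, μ h = 1 := by
    rw [← hw1, sum_symmetrizedMixture]
    simp only [mem_univ, if_true]
    exact sum_congr rfl fun k _ => by ring
  have hmarg (v) : ∑ h ∈ {h : Config | h.value v = true}, μ h = 1 / 2 := by
    rw [sum_symmetrizedMixture, show (1 : ℝ) / 2 = ∑ k, w k / 2 by rw [← sum_div, hw1]]
    refine sum_congr rfl fun k _ => ?_
    simp only [mem_filter, mem_univ, true_and, Config.value_neg]
    cases (Config.ofAgreement (b k)).value v <;> simp
  refine (elfp_iff_exists_edge p ε).2 ⟨μ, fun h => ?_, hμ1, hmarg, fun e => ?_⟩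
  · exact sum_nonneg fun k _ => mul_nonneg (by linarith [hw0 k]) (by split_ifs <;> norm_num)
  · rw [sum_filter_and_eq_half_sum_filter_beq hμ1 (hmarg _) (hmarg _), sum_symmetrizedMixture]
    simp only [mem_filter, mem_univ, true_and]
    have hde := congrFun hwz e
    simp only [Finset.sum_apply, Pi.smul_apply, smul_eq_mul, ← hbz] at hde
    have term (k : κ) : w k / 2 * ((if (Config.ofAgreement (b k)).agreement e then 1 else 0) +
        (if (Config.ofAgreement (b k)).neg.agreement e then 1 else 0)) =
        w k * cubeVertex (b k) e := by
      rw [Config.agreement_neg, Config.agreement_ofAgreement (hb k), cubeVertex]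
      ring
    calc _ = (∑ k, w k * cubeVertex (b k) e) / 2 :=
          congrArg (· / 2) (sum_congr rfl fun k _ => term k)
      _ = edgeProb p ε e := by rw [hde]; ring

theorem elfp_iff_mem_parityPolytope (p ε : Fin 2 → Fin 2 → ℝ) :
    ELFP p ε ↔ (fun e => 2 * edgeProb p ε e) ∈ parityPolytope Edge :=
  ⟨mem_parityPolytope_of_elfp, elfp_of_mem_parityPolytope⟩

def edgeSigns (s t : Fin 2 → Fin 2 → Bool) : Edge → Bool :=
  Sum.elim (Function.uncurry s) (Function.uncurry t)

lemma exists_edgeSigns_eq (b : Edge → Bool) : ∃ s t, edgeSigns s t = b :=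
  ⟨fun i j => b (.inl (i, j)), fun k i => b (.inr (k, i)), by
    funext e; rcases e with ⟨i, j⟩ | ⟨k, i⟩ <;> rfl⟩

lemma card_edgeSigns (s t : Fin 2 → Fin 2 → Bool) :
    #{e | edgeSigns s t e = true} = plusCount s + plusCount t := by
  rw [plusCount, plusCount, card_filter, card_filter, card_filter, Fintype.sum_sum_type]
  rfl

lemma sval_add_sval_eq_sum (p ε : Fin 2 → Fin 2 → ℝ) (s t : Fin 2 → Fin 2 → Bool) :
    Sval p s + Sval ε t =
      ∑ e, (if edgeSigns s t e then 1 else -1) * (edgeProb p ε e - 1 / 4) := by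
  simp only [Sval, edgeSigns, edgeProb, Fintype.sum_sum_type, Fintype.sum_prod_type, Sum.elim_inl,
    Sum.elim_inr, Function.uncurry_apply_pair]
  rfl

lemma vertexDist_edgeSigns (p ε : Fin 2 → Fin 2 → ℝ) (s t : Fin 2 → Fin 2 → Bool) :
    vertexDist (edgeSigns s t) (fun e => 2 * edgeProb p ε e) = 4 - 2 * (Sval p s + Sval ε t) := by
  have term (b : Bool) (x : ℝ) :
      (if b then 1 - 2 * x else 2 * x) = 1 / 2 - 2 * ((if b then 1 else -1) * (x - 1 / 4)) := by
    cases b <;> simp <;> ring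
  rw [vertexDist, sum_congr rfl fun e _ => term _ _, sum_sub_distrib, ← mul_sum,
    sval_add_sval_eq_sum]
  norm_num

lemma sval_add_sval_le_of_elfp {p ε : Fin 2 → Fin 2 → ℝ} (h : ELFP p ε)
    {s t : Fin 2 → Fin 2 → Bool} (hst : ¬Even (plusCount s + plusCount t)) :
    Sval p s + Sval ε t ≤ 3 / 2 := by
  have := one_le_vertexDist_of_mem_parityPolytope ((elfp_iff_mem_parityPolytope p ε).1 h)
    (b := edgeSigns s t) (by rwa [card_edgeSigns])
  rw [vertexDist_edgeSigns] at this
  linarith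

lemma elfp_of_sval_add_sval_le {p ε : Fin 2 → Fin 2 → ℝ}
    (hp : ∀ i j, p i j ∈ Set.Icc (0 : ℝ) (1 / 2)) (hε : ∀ k i, ε k i ∈ Set.Icc (0 : ℝ) (1 / 2))
    (hcycle : ∀ s t, ¬Even (plusCount s + plusCount t) → Sval p s + Sval ε t ≤ 3 / 2) :
    ELFP p ε := by
  have hbox (e : Edge) : 2 * edgeProb p ε e ∈ Set.Icc (0 : ℝ) 1 := by
    have : edgeProb p ε e ∈ Set.Icc (0 : ℝ) (1 / 2) := by
      rcases e with ⟨i, j⟩ | ⟨k, i⟩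
      exacts [hp i j, hε k i]
    constructor <;> linarith [this.1, this.2]
  refine (elfp_iff_mem_parityPolytope p ε).2 (mem_parityPolytope_of_one_le_vertexDist hbox ?_)
  intro b hb
  obtain ⟨s, t, rfl⟩ := exists_edgeSigns_eq b
  rw [card_edgeSigns] at hb
  rw [vertexDist_edgeSigns]
  linarith [hcycle s t hb]

lemma maxS0_le_iff {x : Fin 2 → Fin 2 → ℝ} {c : ℝ} :
    maxS0 x ≤ c ↔ ∀ s, Even (plusCount s) → Sval x s ≤ c :=
  (sup'_le_iff _ _).trans (by simp)

lemma maxS1_le_iff {x : Fin 2 → Fin 2 → ℝ} {c : ℝ} :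
    maxS1 x ≤ c ↔ ∀ s, ¬Even (plusCount s) → Sval x s ≤ c :=
  (sup'_le_iff _ _).trans (by simp)

lemma sval_le_of_abs_sub_le {x : Fin 2 → Fin 2 → ℝ} {r : ℝ} (hx : ∀ i j, |x i j - 1 / 4| ≤ r)
    (s : Fin 2 → Fin 2 → Bool) : Sval x s ≤ 4 * r := by
  have term (i j : Fin 2) : (if s i j then (1 : ℝ) else -1) * (x i j - 1 / 4) ≤ r := by
    have := abs_le.1 (hx i j)
    split_ifs <;> linarith
  calc Sval x s ≤ ∑ _i : Fin 2, ∑ _j : Fin 2, r :=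
        sum_le_sum fun i _ => sum_le_sum fun j _ => term i j
    _ = 4 * r := by simp only [sum_const, card_univ, Fintype.card_fin, nsmul_eq_mul]; ring

noncomputable def signPoint (s : Fin 2 → Fin 2 → Bool) (r : ℝ) : Fin 2 → Fin 2 → ℝ :=
  fun i j => 1 / 4 + if s i j then r else -r

lemma signPoint_mem_Icc (s : Fin 2 → Fin 2 → Bool) {r : ℝ} (hr : |r| ≤ 1 / 4) (i j : Fin 2) :
    signPoint s r i j ∈ Set.Icc (0 : ℝ) (1 / 2) := by
  have := abs_le.1 hr
  simp only [signPoint, Set.mem_Icc]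
  split_ifs <;> constructor <;> linarith

-- Here `vertexDist` is the Hamming distance between `s'` and `s`.
lemma sval_signPoint (s s' : Fin 2 → Fin 2 → Bool) (r : ℝ) :
    Sval (signPoint s r) s' =
      r * (4 - 2 * vertexDist (Function.uncurry s') (cubeVertex (Function.uncurry s))) := by
  have term (b b' : Bool) : (if b' then (1 : ℝ) else -1) * (1 / 4 + (if b then r else -r) - 1 / 4)
      = r * (1 - 2 * if b' then 1 - (if b then 1 else 0) else (if b then 1 else 0)) := by
    cases b <;> cases b' <;> simp <;> ring
  have hdist : vertexDist (Function.uncurry s') (cubeVertex (Function.uncurry s)) =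
      ∑ i, ∑ j, if s' i j then 1 - (if s i j then 1 else 0) else (if s i j then 1 else 0) :=
    Fintype.sum_prod_type _
  rw [hdist]
  simp only [Sval, signPoint, term, Fin.sum_univ_two]
  ring

lemma abs_signPoint_sub (s : Fin 2 → Fin 2 → Bool) (r : ℝ) (i j : Fin 2) :
    |signPoint s r i j - 1 / 4| = |r| := by
  simp only [signPoint, add_sub_cancel_left]
  split_ifs <;> simp

def IsQuantFit (ε : Fin 2 → Fin 2 → ℝ) : Prop :=
  ∀ p : Fin 2 → Fin 2 → ℝ, (∀ i j, p i j ∈ Set.Icc (0 : ℝ) (1 / 2)) →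
    maxS1 p ≤ Real.sqrt 2 / 2 → ELFP p ε

lemma sval_le_of_fit {ε : Fin 2 → Fin 2 → ℝ} (hfit : IsQuantFit ε)
    {s t : Fin 2 → Fin 2 → Bool} (hst : ¬Even (plusCount s + plusCount t)) {r : ℝ}
    (hr : |r| ≤ 1 / 4) (hmax : maxS1 (signPoint s r) ≤ Real.sqrt 2 / 2) :
    Sval ε t ≤ 3 / 2 - 4 * r := by
  have := sval_add_sval_le_of_elfp (hfit _ (signPoint_mem_Icc s hr) hmax) hst
  rw [sval_signPoint, vertexDist_cubeVertex_self] at this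
  linarith

lemma maxS0_le_of_fit {ε : Fin 2 → Fin 2 → ℝ} (hfit : IsQuantFit ε) :
    maxS0 ε ≤ (3 - Real.sqrt 2) / 2 := by
  have hsqrt : Real.sqrt 2 ≤ 2 := Real.sqrt_le_iff.2 ⟨by norm_num, by norm_num⟩
  have hr : |Real.sqrt 2 / 8| ≤ 1 / 4 := by
    rw [abs_of_nonneg (by positivity)]
    linarith
  -- the Tsirelson point: one `+` sign, and `max S₁p = √2/2`
  set s : Fin 2 → Fin 2 → Bool := fun i j => decide (i = 0 ∧ j = 0)
  have hmax : maxS1 (signPoint s (Real.sqrt 2 / 8)) ≤ Real.sqrt 2 / 2 :=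
    maxS1_le_iff.2 fun s' _ => (sval_le_of_abs_sub_le (fun i j => (abs_signPoint_sub s _ i j).le)
      s').trans (by rw [abs_of_nonneg (by positivity)]; linarith)
  refine maxS0_le_iff.2 fun t ht => ?_
  have hst : ¬Even (plusCount s + plusCount t) := by
    rw [show plusCount s = 1 by decide, Nat.even_add]
    simp [ht]
  linarith [sval_le_of_fit hfit hst hr hmax]

lemma maxS1_le_of_fit {ε : Fin 2 → Fin 2 → ℝ} (hfit : IsQuantFit ε) :
    maxS1 ε ≤ 1 / 2 := by
  have hsqrt : 1 ≤ Real.sqrt 2 := Real.one_le_sqrt.2 (by norm_num)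
  -- `signPoint s (1/4)` is `p = 0`; its odd sign sums are at most `1/2`
  set s : Fin 2 → Fin 2 → Bool := fun _ _ => false
  have hs : plusCount s = 0 := by decide
  have hmax : maxS1 (signPoint s (1 / 4)) ≤ Real.sqrt 2 / 2 := by
    refine maxS1_le_iff.2 fun s' hs' => ?_
    have := one_le_vertexDist_cubeVertex (b := Function.uncurry s') (c := Function.uncurry s) hs'
      (by decide)
    rw [sval_signPoint]
    linarith
  refine maxS1_le_iff.2 fun t ht => ?_
  have := sval_le_of_fit hfit (s := s) (t := t) (by rwa [hs, zero_add]) (by norm_num) hmax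
  linarith

lemma elfp_of_maxS_le {p ε : Fin 2 → Fin 2 → ℝ} (hε : ∀ k i, ε k i ∈ Set.Icc (0 : ℝ) (1 / 2))
    (h0 : maxS0 ε ≤ (3 - Real.sqrt 2) / 2) (h1 : maxS1 ε ≤ 1 / 2)
    (hp : ∀ i j, p i j ∈ Set.Icc (0 : ℝ) (1 / 2)) (hp1 : maxS1 p ≤ Real.sqrt 2 / 2) :
    ELFP p ε := by
  refine elfp_of_sval_add_sval_le hp hε fun s t hst => ?_
  rw [Nat.even_add] at hst
  by_cases hs : Even (plusCount s)
  · have hpbox : Sval p s ≤ 4 * (1 / 4) := sval_le_of_abs_sub_le (fun i j =>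
      abs_le.2 ⟨by linarith [(hp i j).1], by linarith [(hp i j).2]⟩) s
    linarith [maxS1_le_iff.1 h1 t (by tauto)]
  · linarith [maxS1_le_iff.1 hp1 s hs, maxS0_le_iff.1 h0 t (by tauto)]

/-- the Fit set for the quantum ("quant") constraint:
`ε` is compatible with every `p ∈ [0,1/2]⁴` satisfying `max S₁p ≤ √2/2` iff
`max S₀ε ≤ (3 − √2)/2` and `max S₁ε ≤ 1/2`. -/
theorem fit_quant
    (ε : Fin 2 → Fin 2 → ℝ)
    (hε : ∀ k i, ε k i ∈ Set.Icc (0 : ℝ) (1 / 2)) :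
    (∀ p : Fin 2 → Fin 2 → ℝ, (∀ i j, p i j ∈ Set.Icc (0 : ℝ) (1 / 2)) →
        maxS1 p ≤ Real.sqrt 2 / 2 → ELFP p ε) ↔
      (maxS0 ε ≤ (3 - Real.sqrt 2) / 2 ∧ maxS1 ε ≤ 1 / 2) :=
  ⟨fun hfit => ⟨maxS0_le_of_fit hfit, maxS1_le_of_fit hfit⟩,
    fun ⟨h0, h1⟩ _ hp hp1 => elfp_of_maxS_le hε h0 h1 hp hp1⟩
end

section
/- Let ε = (ε¹₁,ε¹₂,ε²₁,ε²₂) ∈ [0,1/2]⁴. Then the following are equivalent: (a) for every p ∈ [0,1/2]⁴ with (p, ε) ∈ ELFP, one has max S₁p ≤ √2/2; (b) max S₀ε ≥ (3 − √2)/2. (This characterizes the set Force for the quantum ('quant') constraint.) -/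
open Finset

/-!
Write the `Hᵏᵢⱼ` as spins. They form an 8-cycle whose edges alternate between the `p`-edges
`H¹ᵢⱼ – H²ᵢⱼ` and the `ε`-edges, and around a cycle the product of the edge products `H_u H_v`
is `1`. Hence, for sign choices `σ` with an odd and `τ` with an even number of `+` signs, the
correspondingly signed sum of the eight edge products is pointwise at most `6`; since
`E[H_u H_v] = 4 Pr[H_u = H_v = +1] - 1`, this gives `max S₁p + max S₀ε ≤ 3/2`.

Conversely, for `p = (1/2, 1/2, 1/2, q)` three `p`-edges always agree and the fourth agrees iff an
even number of `ε`-edges disagree, so one needs a law of the four `ε`-edge agreement bits, with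
marginals `2ε`, whose parity is even with probability `< 2 - √2`. Couple the two bits on each side
with agreement probability `ζ`, resp. `ζ'`, anywhere in the Fréchet range, and glue the sides
conditionally independently given their agreement bits, coupled to differ as often as possible:
the parity is then even with probability `|1 - ζ - ζ'|`, and `max S₀ε < (3 - √2)/2` is exactly what
lets this be `< 2 - √2`. Symmetrising under the global spin flip makes the marginals uniform.
-/

def spin (b : Bool) : ℝ := if b then 1 else -1

theorem spin_beq (a b : Bool) : spin (a == b) = spin a * spin b := by
  cases a <;> cases b <;> norm_num [spin]

theorem spin_mul_spin_le (a b : Bool) : spin a * spin b ≤ 1 := by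
  cases a <;> cases b <;> norm_num [spin]

theorem spin_mul_spin_of_ne {a b : Bool} (h : a ≠ b) : spin a * spin b = -1 := by
  cases a <;> cases b <;> simp_all [spin]

theorem exists_spin_mul_eq_abs (u : ℝ) : ∃ b, spin b * u = |u| := by
  rcases le_total 0 u with h | h
  · exact ⟨true, by simp [spin, abs_of_nonneg h]⟩
  · exact ⟨false, by simp [spin, abs_of_nonpos h]⟩

theorem sum_spin_mul_spin_le (s t : Fin 2 → Fin 2 → Bool) :
    ∑ i, ∑ j, spin (s i j) * spin (t i j) ≤ 4 := by
  have hle i j := spin_mul_spin_le (s i j) (t i j)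
  simp only [Fin.sum_univ_two]
  linarith [hle 0 0, hle 0 1, hle 1 0, hle 1 1]

theorem sum_spin_mul_spin_le_two {s t : Fin 2 → Fin 2 → Bool} (hst : s ≠ t) :
    ∑ i, ∑ j, spin (s i j) * spin (t i j) ≤ 2 := by
  have hne : ∃ i j, s i j ≠ t i j := by
    by_contra! h
    exact hst (funext₂ h)
  have hle i j := spin_mul_spin_le (s i j) (t i j)
  simp only [Fin.exists_fin_two] at hne
  simp only [Fin.sum_univ_two]
  rcases hne with (h | h) | (h | h) <;>
    linarith [spin_mul_spin_of_ne h, hle 0 0, hle 0 1, hle 1 0, hle 1 1]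

theorem prod_spin_eq (s : Fin 2 → Fin 2 → Bool) :
    ∏ i, ∏ j, spin (s i j) = if Even (plusCount s) then 1 else -1 := by
  have hcount : plusCount s = (if s 0 0 then 1 else 0) + (if s 0 1 then 1 else 0) +
      ((if s 1 0 then 1 else 0) + (if s 1 1 then 1 else 0)) := by
    rw [plusCount, Finset.card_filter, Fintype.sum_prod_type]
    simp only [Fin.sum_univ_two]
  rw [hcount]
  simp only [Fin.prod_univ_two, spin]
  cases s 0 0 <;> cases s 0 1 <;> cases s 1 0 <;> cases s 1 1 <;> norm_num [Nat.even_iff]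

def pAgree (h : Config) (i j : Fin 2) : Bool := h 0 i j == h 1 i j

def εAgree (h : Config) : Fin 2 → Fin 2 → Bool :=
  ![fun i => h 0 i 0 == h 0 i 1, fun j => h 1 0 j == h 1 1 j]

/-- Both products equal `∏ spin (h k i j)`: every vertex lies on exactly one `p`-edge and on
exactly one `ε`-edge of the 8-cycle. -/
theorem prod_spin_pAgree (h : Config) :
    ∏ i, ∏ j, spin (pAgree h i j) = ∏ k, ∏ i, spin (εAgree h k i) := by
  simp only [pAgree, εAgree, Fin.prod_univ_two, spin_beq, Matrix.cons_val_zero,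
    Matrix.cons_val_one]
  ring

theorem even_plusCount_pAgree_iff (h : Config) :
    Even (plusCount (pAgree h)) ↔ Even (plusCount (εAgree h)) := by
  have hprod := prod_spin_pAgree h
  rw [prod_spin_eq, prod_spin_eq] at hprod
  split_ifs at hprod <;> norm_num at hprod <;> tauto

theorem signed_agreement_le_six {σ τ : Fin 2 → Fin 2 → Bool} (hσ : ¬ Even (plusCount σ))
    (hτ : Even (plusCount τ)) (h : Config) :
    ∑ i, ∑ j, spin (σ i j) * spin (pAgree h i j) +
      ∑ k, ∑ i, spin (τ k i) * spin (εAgree h k i) ≤ 6 := by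
  by_cases hp : σ = pAgree h
  · have hε : τ ≠ εAgree h := by
      rintro rfl
      exact hσ (hp ▸ (even_plusCount_pAgree_iff h).2 hτ)
    linarith [sum_spin_mul_spin_le σ (pAgree h), sum_spin_mul_spin_le_two hε]
  · linarith [sum_spin_mul_spin_le_two hp, sum_spin_mul_spin_le τ (εAgree h)]

theorem sum_mul_spin_beq {α : Type*} [Fintype α] (μ : α → ℝ) (f g : α → Bool) {q : ℝ}
    (htot : ∑ h, μ h = 1)
    (hf : ∑ h with f h = true, μ h = 1 / 2) (hg : ∑ h with g h = true, μ h = 1 / 2)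
    (hfg : ∑ h with f h = true ∧ g h = true, μ h = q) :
    ∑ h, μ h * spin (f h == g h) = 4 * q - 1 := by
  have hpoint h : μ h * spin (f h == g h) =
      4 * (if f h = true ∧ g h = true then μ h else 0)
        - 2 * (if f h = true then μ h else 0) - 2 * (if g h = true then μ h else 0) + μ h := by
    cases f h <;> cases g h <;> simp [spin] <;> ring
  simp only [hpoint, Finset.sum_add_distrib, Finset.sum_sub_distrib, ← Finset.mul_sum,
    ← Finset.sum_filter, hfg, hf, hg, htot]
  ring

theorem sum_mul_sum_spin {α : Type*} [Fintype α] (μ : α → ℝ) (A : α → Fin 2 → Fin 2 → Bool)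
    (x : Fin 2 → Fin 2 → ℝ) (hA : ∀ i j, ∑ h, μ h * spin (A h i j) = 4 * x i j - 1)
    (s : Fin 2 → Fin 2 → Bool) :
    ∑ h, μ h * ∑ i, ∑ j, spin (s i j) * spin (A h i j) = 4 * Sval x s := by
  calc ∑ h, μ h * ∑ i, ∑ j, spin (s i j) * spin (A h i j)
      = ∑ i, ∑ j, spin (s i j) * ∑ h, μ h * spin (A h i j) := by
        simp only [Finset.mul_sum]
        rw [Finset.sum_comm]
        refine Finset.sum_congr rfl fun i _ => ?_
        rw [Finset.sum_comm]
        refine Finset.sum_congr rfl fun j _ => Finset.sum_congr rfl fun h _ => ?_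
        ring
    _ = 4 * Sval x s := by
        simp only [hA, Sval, Finset.mul_sum]
        unfold spin
        refine Finset.sum_congr rfl fun i _ => Finset.sum_congr rfl fun j _ => ?_
        ring

theorem Sval_le_maxS0 (x : Fin 2 → Fin 2 → ℝ) {τ : Fin 2 → Fin 2 → Bool}
    (hτ : Even (plusCount τ)) : Sval x τ ≤ maxS0 x :=
  Finset.le_sup' (Sval x) (Finset.mem_filter.2 ⟨Finset.mem_univ τ, hτ⟩)

theorem Sval_le_maxS1 (x : Fin 2 → Fin 2 → ℝ) {σ : Fin 2 → Fin 2 → Bool}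
    (hσ : ¬ Even (plusCount σ)) : Sval x σ ≤ maxS1 x :=
  Finset.le_sup' (Sval x) (Finset.mem_filter.2 ⟨Finset.mem_univ σ, hσ⟩)

theorem Sval_add_Sval_le_of_ELFP {p ε : Fin 2 → Fin 2 → ℝ} (hE : ELFP p ε)
    {σ τ : Fin 2 → Fin 2 → Bool} (hσ : ¬ Even (plusCount σ)) (hτ : Even (plusCount τ)) :
    Sval p σ + Sval ε τ ≤ 3 / 2 := by
  obtain ⟨μ, hμ, htot, hmarg, hp, hε₀, hε₁⟩ := hE
  have hpA : ∀ i j, ∑ h, μ h * spin (pAgree h i j) = 4 * p i j - 1 := fun i j =>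
    sum_mul_spin_beq μ _ _ htot (hmarg 0 i j) (hmarg 1 i j) (hp i j)
  have hεA : ∀ k i, ∑ h, μ h * spin (εAgree h k i) = 4 * ε k i - 1 := by
    intro k i
    fin_cases k
    · exact sum_mul_spin_beq μ _ _ htot (hmarg 0 i 0) (hmarg 0 i 1) (hε₀ i)
    · exact sum_mul_spin_beq μ _ _ htot (hmarg 1 0 i) (hmarg 1 1 i) (hε₁ i)
  have hsix : ∑ h, μ h * (∑ i, ∑ j, spin (σ i j) * spin (pAgree h i j) +
      ∑ k, ∑ i, spin (τ k i) * spin (εAgree h k i)) ≤ ∑ h, μ h * 6 :=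
    Finset.sum_le_sum fun h _ =>
      mul_le_mul_of_nonneg_left (signed_agreement_le_six hσ hτ h) (hμ h)
  simp only [mul_add, Finset.sum_add_distrib, sum_mul_sum_spin μ _ _ hpA,
    sum_mul_sum_spin μ _ _ hεA, ← Finset.sum_mul, htot] at hsix
  linarith

theorem maxS1_add_maxS0_le_of_ELFP {p ε : Fin 2 → Fin 2 → ℝ} (hE : ELFP p ε) :
    maxS1 p + maxS0 ε ≤ 3 / 2 := by
  obtain ⟨τ, hτ, hτmax⟩ := Finset.exists_mem_eq_sup'
    (s := univ.filter fun s => Even (plusCount s)) ⟨fun _ _ => false, by decide⟩ (Sval ε)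
  have hmax0 : maxS0 ε = Sval ε τ := hτmax
  rw [hmax0, ← le_sub_iff_add_le]
  refine Finset.sup'_le _ _ fun σ hσ => ?_
  linarith [Sval_add_Sval_le_of_ELFP hE (Finset.mem_filter.1 hσ).2 (Finset.mem_filter.1 hτ).2]

theorem abs_sub_add_abs_sub_le_maxS0 (x : Fin 2 → Fin 2 → ℝ) :
    |x 0 0 - x 0 1| + |x 1 0 - x 1 1| ≤ maxS0 x := by
  obtain ⟨b, hb⟩ := exists_spin_mul_eq_abs (x 0 0 - x 0 1)
  obtain ⟨c, hc⟩ := exists_spin_mul_eq_abs (x 1 0 - x 1 1)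
  have hSval : Sval x ![![b, !b], ![c, !c]] =
      spin b * (x 0 0 - x 0 1) + spin c * (x 1 0 - x 1 1) := by
    cases b <;> cases c <;> simp [Sval, Fin.sum_univ_two, spin]
  rw [← hb, ← hc, ← hSval]
  exact Sval_le_maxS0 x (by cases b <;> cases c <;> decide)

theorem abs_add_sub_add_abs_add_sub_le_maxS0 (x : Fin 2 → Fin 2 → ℝ) :
    |x 0 0 + x 0 1 - 1 / 2| + |x 1 0 + x 1 1 - 1 / 2| ≤ maxS0 x := by
  obtain ⟨b, hb⟩ := exists_spin_mul_eq_abs (x 0 0 + x 0 1 - 1 / 2)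
  obtain ⟨c, hc⟩ := exists_spin_mul_eq_abs (x 1 0 + x 1 1 - 1 / 2)
  have hSval : Sval x ![![b, b], ![c, c]] =
      spin b * (x 0 0 + x 0 1 - 1 / 2) + spin c * (x 1 0 + x 1 1 - 1 / 2) := by
    cases b <;> cases c <;> simp [Sval, Fin.sum_univ_two, spin] <;> ring_nf
  rw [← hb, ← hc, ← hSval]
  exact Sval_le_maxS0 x (by cases b <;> cases c <;> decide)

section Gluing

variable {α β κ η : Type*} [Fintype α] [Fintype β] [DecidableEq κ] [DecidableEq η]

/-- The coupling of `P` and `Q` under which `(f a, g b)` has law `R` and `a`, `b` are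
conditionally independent given `(f a, g b)`. A fibre of mass `0` forces `P z.1 = 0` or
`Q z.2 = 0`, so the junk value of `x / 0` is harmless. -/
noncomputable def glue (P : α → ℝ) (Q : β → ℝ) (f : α → κ) (g : β → η) (R : κ × η → ℝ)
    (z : α × β) : ℝ :=
  P z.1 * Q z.2 * R (f z.1, g z.2) / ((∑ a with f a = f z.1, P a) * ∑ b with g b = g z.2, Q b)

variable {P : α → ℝ} {Q : β → ℝ} {f : α → κ} {g : β → η} {R : κ × η → ℝ}

theorem glue_nonneg (hP : ∀ a, 0 ≤ P a) (hQ : ∀ b, 0 ≤ Q b) (hR : ∀ w, 0 ≤ R w) (z : α × β) :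
    0 ≤ glue P Q f g R z :=
  div_nonneg (mul_nonneg (mul_nonneg (hP _) (hQ _)) (hR _))
    (mul_nonneg (Finset.sum_nonneg fun a _ => hP a) (Finset.sum_nonneg fun b _ => hQ b))

theorem glue_swap (z : α × β) : glue Q P g f (R ∘ Prod.swap) z.swap = glue P Q f g R z := by
  simp only [glue, Prod.fst_swap, Prod.snd_swap, Function.comp_apply, Prod.swap_prod_mk]
  ring

variable [Fintype κ] [Fintype η]

theorem sum_snd_glue (hP : ∀ a, 0 ≤ P a) (hR : ∀ w, 0 ≤ R w)
    (hRf : ∀ i, ∑ j, R (i, j) = ∑ a with f a = i, P a)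
    (hRg : ∀ j, ∑ i, R (i, j) = ∑ b with g b = j, Q b) (a : α) :
    ∑ b, glue P Q f g R (a, b) = P a := by
  have hfiber : ∀ i, ∑ b, Q b * (R (i, g b) / ∑ b' with g b' = g b, Q b') = ∑ j, R (i, j) := by
    intro i
    rw [← Finset.sum_fiberwise univ g]
    refine Finset.sum_congr rfl fun j _ => ?_
    rw [Finset.sum_congr rfl fun b hb => by rw [(Finset.mem_filter.1 hb).2], ← Finset.sum_mul]
    refine mul_div_cancel_of_imp' fun h0 => le_antisymm ?_ (hR _)
    calc R (i, j) ≤ ∑ i', R (i', j) :=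
          Finset.single_le_sum (f := fun i' => R (i', j)) (fun i' _ => hR _) (Finset.mem_univ i)
      _ = 0 := (hRg j).trans h0
  calc ∑ b, glue P Q f g R (a, b)
      = P a / (∑ a' with f a' = f a, P a') *
          ∑ b, Q b * (R (f a, g b) / ∑ b' with g b' = g b, Q b') := by
        rw [Finset.mul_sum]
        refine Finset.sum_congr rfl fun b _ => ?_
        simp only [glue]
        ring
    _ = P a := by
        rw [hfiber, hRf]
        have hPa : P a ≤ ∑ a' with f a' = f a, P a' :=
          Finset.single_le_sum (fun a' _ => hP a') (by simp)
        exact div_mul_cancel_of_imp fun h0 => le_antisymm (h0 ▸ hPa) (hP a)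

theorem sum_fst_glue (hQ : ∀ b, 0 ≤ Q b) (hR : ∀ w, 0 ≤ R w)
    (hRf : ∀ i, ∑ j, R (i, j) = ∑ a with f a = i, P a)
    (hRg : ∀ j, ∑ i, R (i, j) = ∑ b with g b = j, Q b) (b : β) :
    ∑ a, glue P Q f g R (a, b) = Q b := by
  calc ∑ a, glue P Q f g R (a, b) = ∑ a, glue Q P g f (R ∘ Prod.swap) (b, a) :=
        Finset.sum_congr rfl fun a _ => (glue_swap (a, b)).symm
    _ = Q b := sum_snd_glue hQ (fun w => hR w.swap) hRg hRf b

theorem sum_filter_fst_glue (hP : ∀ a, 0 ≤ P a) (hR : ∀ w, 0 ≤ R w)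
    (hRf : ∀ i, ∑ j, R (i, j) = ∑ a with f a = i, P a)
    (hRg : ∀ j, ∑ i, R (i, j) = ∑ b with g b = j, Q b) (A : α → Prop) [DecidablePred A] :
    ∑ z with A z.1, glue P Q f g R z = ∑ a with A a, P a := by
  rw [← univ_product_univ, filter_product_left, sum_product]
  exact Finset.sum_congr rfl fun a _ => sum_snd_glue hP hR hRf hRg a

theorem sum_filter_snd_glue (hQ : ∀ b, 0 ≤ Q b) (hR : ∀ w, 0 ≤ R w)
    (hRf : ∀ i, ∑ j, R (i, j) = ∑ a with f a = i, P a)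
    (hRg : ∀ j, ∑ i, R (i, j) = ∑ b with g b = j, Q b) (B : β → Prop) [DecidablePred B] :
    ∑ z with B z.2, glue P Q f g R z = ∑ b with B b, Q b := by
  rw [← univ_product_univ, filter_product_right, sum_product_right]
  exact Finset.sum_congr rfl fun b _ => sum_fst_glue hQ hR hRf hRg b

theorem sum_filter_map_eq_glue (hR : ∀ w, 0 ≤ R w)
    (hRf : ∀ i, ∑ j, R (i, j) = ∑ a with f a = i, P a)
    (hRg : ∀ j, ∑ i, R (i, j) = ∑ b with g b = j, Q b) (w : κ × η) :
    ∑ z with (f z.1, g z.2) = w, glue P Q f g R z = R w := by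
  have hfilter : (univ.filter fun z : α × β => (f z.1, g z.2) = w) =
      (univ.filter fun a => f a = w.1) ×ˢ (univ.filter fun b => g b = w.2) := by
    rw [← filter_product, univ_product_univ]
    simp only [Prod.ext_iff]
  have hzero : (∑ a with f a = w.1, P a) * (∑ b with g b = w.2, Q b) = 0 → R w = 0 := by
    intro h0
    refine le_antisymm ?_ (hR w)
    rcases mul_eq_zero.1 h0 with h0 | h0
    · calc R w ≤ ∑ j, R (w.1, j) :=
            Finset.single_le_sum (f := fun j => R (w.1, j)) (fun j _ => hR _) (Finset.mem_univ w.2)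
        _ = 0 := (hRf w.1).trans h0
    · calc R w ≤ ∑ i, R (i, w.2) :=
            Finset.single_le_sum (f := fun i => R (i, w.2)) (fun i _ => hR _) (Finset.mem_univ w.1)
        _ = 0 := (hRg w.2).trans h0
  set X := R w / ((∑ a with f a = w.1, P a) * ∑ b with g b = w.2, Q b) with hX
  rw [hfilter, sum_product]
  calc ∑ a with f a = w.1, ∑ b with g b = w.2, glue P Q f g R (a, b)
      = (∑ a with f a = w.1, P a) * (∑ b with g b = w.2, Q b) * X := by
        rw [Finset.sum_mul_sum, Finset.sum_mul]
        refine Finset.sum_congr rfl fun a ha => ?_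
        rw [Finset.sum_mul]
        refine Finset.sum_congr rfl fun b hb => ?_
        simp only [glue, hX, (Finset.mem_filter.1 ha).2, (Finset.mem_filter.1 hb).2]
        ring
    _ = R w := mul_div_cancel_of_imp' hzero

theorem sum_filter_glue (hR : ∀ w, 0 ≤ R w)
    (hRf : ∀ i, ∑ j, R (i, j) = ∑ a with f a = i, P a)
    (hRg : ∀ j, ∑ i, R (i, j) = ∑ b with g b = j, Q b) (C : κ × η → Prop) [DecidablePred C] :
    ∑ z with C (f z.1, g z.2), glue P Q f g R z = ∑ w with C w, R w := by
  rw [← Finset.sum_fiberwise_of_maps_to (g := fun z : α × β => (f z.1, g z.2))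
    (t := univ.filter C) (fun z hz => by simpa using hz)]
  refine Finset.sum_congr rfl fun w hw => ?_
  rw [← sum_filter_map_eq_glue hR hRf hRg w, Finset.filter_filter]
  refine Finset.sum_congr (Finset.filter_congr fun z _ => ?_) fun _ _ => rfl
  constructor
  · exact fun h => h.2
  · intro h
    exact ⟨h ▸ (Finset.mem_filter.1 hw).2, h⟩

end Gluing

noncomputable def pairLaw (a b ζ : ℝ) : Bool × Bool → ℝ
  | (true, true) => (a + b + ζ - 1) / 2
  | (true, false) => (1 + a - b - ζ) / 2
  | (false, true) => (1 - a + b - ζ) / 2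
  | (false, false) => (1 - a - b + ζ) / 2

section PairLaw

variable {a b ζ : ℝ}

theorem pairLaw_nonneg (hlo : |1 - a - b| ≤ ζ) (hhi : ζ ≤ 1 - |a - b|) (x : Bool × Bool) :
    0 ≤ pairLaw a b ζ x := by
  have := le_abs_self (1 - a - b)
  have := neg_abs_le (1 - a - b)
  have := le_abs_self (a - b)
  have := neg_abs_le (a - b)
  rcases x with ⟨_ | _, _ | _⟩ <;> simp only [pairLaw] <;> linarith

theorem sum_pairLaw_fst (i : Bool) : ∑ j, pairLaw a b ζ (i, j) = if i then a else 1 - a := by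
  cases i <;> simp [pairLaw] <;> ring

theorem sum_pairLaw_snd (j : Bool) : ∑ i, pairLaw a b ζ (i, j) = if j then b else 1 - b := by
  cases j <;> simp [pairLaw] <;> ring

theorem sum_filter_pairLaw_beq (i : Bool) :
    ∑ x with (x.1 == x.2) = i, pairLaw a b ζ x = if i then ζ else 1 - ζ := by
  cases i <;> simp [Finset.sum_filter, Fintype.sum_prod_type, pairLaw] <;> ring

theorem sum_filter_pairLaw_fst : ∑ x with x.1 = true, pairLaw a b ζ x = a := by
  simp [Finset.sum_filter, Fintype.sum_prod_type, pairLaw]; ring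

theorem sum_filter_pairLaw_snd : ∑ x with x.2 = true, pairLaw a b ζ x = b := by
  simp [Finset.sum_filter, Fintype.sum_prod_type, pairLaw]; ring

theorem sum_pairLaw : ∑ x, pairLaw a b ζ x = 1 := by
  simp [Fintype.sum_prod_type, pairLaw]; ring

end PairLaw

theorem abs_one_sub_sub_le_one_sub_abs_sub {u v : ℝ} (hu : u ∈ Set.Icc (0 : ℝ) 1)
    (hv : v ∈ Set.Icc (0 : ℝ) 1) : |1 - u - v| ≤ 1 - |u - v| := by
  obtain ⟨hu₀, hu₁⟩ := hu
  obtain ⟨hv₀, hv₁⟩ := hv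
  rcases abs_cases (1 - u - v) with ⟨h₁, -⟩ | ⟨h₁, -⟩ <;>
    rcases abs_cases (u - v) with ⟨h₂, -⟩ | ⟨h₂, -⟩ <;> linarith

theorem mem_Icc_of_abs_le_of_le_one_sub_abs {a b ζ : ℝ} (hlo : |1 - a - b| ≤ ζ)
    (hhi : ζ ≤ 1 - |a - b|) : ζ ∈ Set.Icc (0 : ℝ) 1 :=
  ⟨(abs_nonneg _).trans hlo, hhi.trans (by linarith [abs_nonneg (a - b)])⟩

theorem exists_law_parity {a b c d ζ ζ' : ℝ} (hζ : |1 - a - b| ≤ ζ ∧ ζ ≤ 1 - |a - b|)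
    (hζ' : |1 - c - d| ≤ ζ' ∧ ζ' ≤ 1 - |c - d|) :
    ∃ ν : (Bool × Bool) × (Bool × Bool) → ℝ, (∀ z, 0 ≤ ν z) ∧ ∑ z, ν z = 1 ∧
      ∑ z with z.1.1 = true, ν z = a ∧ ∑ z with z.1.2 = true, ν z = b ∧
      ∑ z with z.2.1 = true, ν z = c ∧ ∑ z with z.2.2 = true, ν z = d ∧
      ∑ z with ((z.1.1 == z.1.2) == (z.2.1 == z.2.2)) = true, ν z = |1 - ζ - ζ'| := by
  set agree : Bool × Bool → Bool := fun x => x.1 == x.2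
  -- `|1 - ζ - ζ'|` is the least possible agreement probability of bits with marginals `ζ`, `ζ'`.
  set R := pairLaw ζ ζ' |1 - ζ - ζ'|
  have hP := pairLaw_nonneg hζ.1 hζ.2
  have hQ := pairLaw_nonneg hζ'.1 hζ'.2
  have hR : ∀ w, 0 ≤ R w := pairLaw_nonneg le_rfl <| abs_one_sub_sub_le_one_sub_abs_sub
    (mem_Icc_of_abs_le_of_le_one_sub_abs hζ.1 hζ.2)
    (mem_Icc_of_abs_le_of_le_one_sub_abs hζ'.1 hζ'.2)
  have hRf : ∀ i, ∑ j, R (i, j) = ∑ x with agree x = i, pairLaw a b ζ x := fun i => by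
    rw [sum_pairLaw_fst, sum_filter_pairLaw_beq]
  have hRg : ∀ j, ∑ i, R (i, j) = ∑ x with agree x = j, pairLaw c d ζ' x := fun j => by
    rw [sum_pairLaw_snd, sum_filter_pairLaw_beq]
  refine ⟨glue (pairLaw a b ζ) (pairLaw c d ζ') agree agree R, glue_nonneg hP hQ hR, ?_, ?_, ?_,
    ?_, ?_, ?_⟩
  · simpa [sum_pairLaw] using sum_filter_fst_glue hP hR hRf hRg (fun _ => True)
  · rw [sum_filter_fst_glue hP hR hRf hRg (fun x => x.1 = true), sum_filter_pairLaw_fst]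
  · rw [sum_filter_fst_glue hP hR hRf hRg (fun x => x.2 = true), sum_filter_pairLaw_snd]
  · rw [sum_filter_snd_glue hQ hR hRf hRg (fun y => y.1 = true), sum_filter_pairLaw_fst]
  · rw [sum_filter_snd_glue hQ hR hRf hRg (fun y => y.2 = true), sum_filter_pairLaw_snd]
  · have hdiag := sum_filter_glue hR hRf hRg (fun w => (w.1 == w.2) = true)
    rwa [sum_filter_pairLaw_beq, if_pos rfl] at hdiag

def flipAll (h : Config) : Config := fun k i j => !h k i j

noncomputable def symmLaw {ι : Type*} [Fintype ι] (ν : ι → ℝ) (φ : ι → Config) (h : Config) :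
    ℝ :=
  ∑ x, ν x * ((if φ x = h then 1 else 0) + (if flipAll (φ x) = h then 1 else 0)) / 2

section SymmLaw

variable {ι : Type*} [Fintype ι] {ν : ι → ℝ} {φ : ι → Config}

theorem sum_filter_symmLaw (C : Config → Prop) [DecidablePred C] :
    ∑ h with C h, symmLaw ν φ h =
      ∑ x, ν x * ((if C (φ x) then 1 else 0) + (if C (flipAll (φ x)) then 1 else 0)) / 2 := by
  unfold symmLaw
  rw [Finset.sum_comm]
  refine Finset.sum_congr rfl fun x _ => ?_
  simp only [← Finset.sum_div, ← Finset.mul_sum, Finset.sum_add_distrib, Finset.sum_ite_eq,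
    Finset.mem_filter, Finset.mem_univ, true_and]

theorem sum_symmLaw : ∑ h, symmLaw ν φ h = ∑ x, ν x := by
  simpa [one_add_one_eq_two] using sum_filter_symmLaw (ν := ν) (φ := φ) (fun _ => True)

theorem sum_filter_symmLaw_eq_true (u : Config → Bool) (hu : ∀ h, u (flipAll h) = !u h) :
    ∑ h with u h = true, symmLaw ν φ h = (∑ x, ν x) / 2 := by
  rw [sum_filter_symmLaw, Finset.sum_div]
  refine Finset.sum_congr rfl fun x _ => ?_
  rw [hu]
  cases u (φ x) <;> simp

theorem sum_filter_symmLaw_and (u v : Config → Bool) (hu : ∀ h, u (flipAll h) = !u h)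
    (hv : ∀ h, v (flipAll h) = !v h) :
    ∑ h with u h = true ∧ v h = true, symmLaw ν φ h =
      (∑ x with (u (φ x) == v (φ x)) = true, ν x) / 2 := by
  rw [sum_filter_symmLaw, Finset.sum_filter, Finset.sum_div]
  refine Finset.sum_congr rfl fun x _ => ?_
  rw [hu, hv]
  cases u (φ x) <;> cases v (φ x) <;> simp

theorem symmLaw_nonneg (hν : ∀ x, 0 ≤ ν x) (h : Config) : 0 ≤ symmLaw ν φ h :=
  Finset.sum_nonneg fun x _ => by have := hν x; positivity

theorem ELFP_of_law (hν : ∀ x, 0 ≤ ν x) (htot : ∑ x, ν x = 1) {p ε : Fin 2 → Fin 2 → ℝ}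
    (hp : ∀ i j, ∑ x with pAgree (φ x) i j = true, ν x = 2 * p i j)
    (hε : ∀ k i, ∑ x with εAgree (φ x) k i = true, ν x = 2 * ε k i) : ELFP p ε := by
  have hand (k i j k' i' j' : Fin 2) :
      ∑ h with h k i j = true ∧ h k' i' j' = true, symmLaw ν φ h =
        (∑ x with (φ x k i j == φ x k' i' j') = true, ν x) / 2 :=
    sum_filter_symmLaw_and (fun h => h k i j) (fun h => h k' i' j') (fun _ => rfl) (fun _ => rfl)
  refine ⟨symmLaw ν φ, symmLaw_nonneg hν, ?_, fun k i j => ?_, fun i j => ?_, fun i => ?_,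
    fun j => ?_⟩
  · rw [sum_symmLaw, htot]
  · rw [sum_filter_symmLaw_eq_true (fun h => h k i j) (fun _ => rfl), htot]
  · rw [hand]
    change (∑ x with pAgree (φ x) i j = true, ν x) / 2 = _
    rw [hp]; ring
  · rw [hand]
    change (∑ x with εAgree (φ x) 0 i = true, ν x) / 2 = _
    rw [hε]; ring
  · rw [hand]
    change (∑ x with εAgree (φ x) 1 j = true, ν x) / 2 = _
    rw [hε]; ring

end SymmLaw

/-- Fix `H¹₁₁ = H²₁₁ = +1` and walk along the 8-cycle avoiding the edge `H¹₂₂ – H²₂₂`, so that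
the four `ε`-edges agree exactly as prescribed by `z` and the other three `p`-edges always
agree. -/
def treeConfig (z : (Bool × Bool) × (Bool × Bool)) : Config :=
  ![![![true, z.1.1], ![z.2.1, z.1.2 == z.2.1]], ![![true, z.1.1], ![z.2.1, z.1.1 == z.2.2]]]

theorem pAgree_treeConfig (z : (Bool × Bool) × (Bool × Bool)) :
    pAgree (treeConfig z) = ![![true, true], ![true, (z.1.1 == z.1.2) == (z.2.1 == z.2.2)]] := by
  revert z; decide

theorem εAgree_treeConfig (z : (Bool × Bool) × (Bool × Bool)) :
    εAgree (treeConfig z) = ![![z.1.1, z.1.2], ![z.2.1, z.2.2]] := by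
  revert z; decide

theorem exists_mem_Icc_add_mem_Icc_abs_sub_lt {L₁ U₁ L₂ U₂ t c : ℝ} (h₁ : L₁ ≤ U₁) (h₂ : L₂ ≤ U₂)
    (hc : 0 < c) (hL : L₁ + L₂ < t + c) (hU : t - c < U₁ + U₂) :
    ∃ x₁ ∈ Set.Icc L₁ U₁, ∃ x₂ ∈ Set.Icc L₂ U₂, |t - (x₁ + x₂)| < c := by
  set S := max (L₁ + L₂) (min t (U₁ + U₂))
  have hSL : L₁ + L₂ ≤ S := le_max_left _ _
  have hSU : S ≤ U₁ + U₂ := max_le (by linarith) (min_le_right _ _)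
  have hS : |t - S| < c := by
    have hmin : min t (U₁ + U₂) ≤ S := le_max_right _ _
    rw [abs_lt]
    constructor
    · rcases max_cases (L₁ + L₂) (min t (U₁ + U₂)) with ⟨h, -⟩ | ⟨h, -⟩ <;>
        linarith [min_le_left t (U₁ + U₂)]
    · rcases min_cases t (U₁ + U₂) with ⟨h, -⟩ | ⟨h, -⟩ <;> linarith
  refine ⟨max L₁ (S - U₂), ⟨le_max_left _ _, max_le h₁ (by linarith)⟩, S - max L₁ (S - U₂),
    ⟨by linarith [max_le (show L₁ ≤ S - L₂ by linarith) (show S - U₂ ≤ S - L₂ by linarith)],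
      by linarith [le_max_right L₁ (S - U₂)]⟩, by rwa [add_sub_cancel]⟩

theorem ELFP_of_law_parity {ε : Fin 2 → Fin 2 → ℝ} {ν : (Bool × Bool) × (Bool × Bool) → ℝ}
    (hν : ∀ z, 0 ≤ ν z) (htot : ∑ z, ν z = 1)
    (h₀₀ : ∑ z with z.1.1 = true, ν z = 2 * ε 0 0) (h₀₁ : ∑ z with z.1.2 = true, ν z = 2 * ε 0 1)
    (h₁₀ : ∑ z with z.2.1 = true, ν z = 2 * ε 1 0) (h₁₁ : ∑ z with z.2.2 = true, ν z = 2 * ε 1 1) :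
    ELFP ![![1 / 2, 1 / 2],
      ![1 / 2, (∑ z with ((z.1.1 == z.1.2) == (z.2.1 == z.2.2)) = true, ν z) / 2]] ε := by
  refine ELFP_of_law (φ := treeConfig) hν htot (fun i j => ?_) (fun k i => ?_)
  · simp only [pAgree_treeConfig]
    fin_cases i <;> fin_cases j <;> simp [htot]
    ring
  · simp only [εAgree_treeConfig]
    fin_cases k <;> fin_cases i <;> simp [h₀₀, h₀₁, h₁₀, h₁₁]

theorem exists_frechet_abs_one_sub_sub_lt {ε : Fin 2 → Fin 2 → ℝ}
    (hε : ∀ k i, ε k i ∈ Set.Icc (0 : ℝ) (1 / 2)) (h : maxS0 ε < (3 - √2) / 2) :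
    ∃ ζ ζ' : ℝ, (|1 - 2 * ε 0 0 - 2 * ε 0 1| ≤ ζ ∧ ζ ≤ 1 - |2 * ε 0 0 - 2 * ε 0 1|) ∧
      (|1 - 2 * ε 1 0 - 2 * ε 1 1| ≤ ζ' ∧ ζ' ≤ 1 - |2 * ε 1 0 - 2 * ε 1 1|) ∧
      |1 - ζ - ζ'| < 2 - √2 := by
  have hy : ∀ k i, 2 * ε k i ∈ Set.Icc (0 : ℝ) 1 := fun k i =>
    ⟨by linarith [(hε k i).1], by linarith [(hε k i).2]⟩
  have habs₁ (u v : ℝ) : |1 - 2 * u - 2 * v| = 2 * |u + v - 1 / 2| := by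
    rw [show 1 - 2 * u - 2 * v = -2 * (u + v - 1 / 2) by ring, abs_mul]; norm_num
  have habs₂ (u v : ℝ) : |2 * u - 2 * v| = 2 * |u - v| := by
    rw [← mul_sub, abs_mul, abs_two]
  obtain ⟨ζ, hζ, ζ', hζ', hK⟩ := exists_mem_Icc_add_mem_Icc_abs_sub_lt (t := 1) (c := 2 - √2)
    (abs_one_sub_sub_le_one_sub_abs_sub (hy 0 0) (hy 0 1))
    (abs_one_sub_sub_le_one_sub_abs_sub (hy 1 0) (hy 1 1))
    (by linarith [Real.sqrt_two_lt_three_halves])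
    (by rw [habs₁, habs₁]; linarith [abs_add_sub_add_abs_add_sub_le_maxS0 ε])
    (by rw [habs₂, habs₂]; linarith [abs_sub_add_abs_sub_le_maxS0 ε])
  exact ⟨ζ, ζ', hζ, hζ', by rwa [← sub_sub] at hK⟩

theorem exists_ELFP_sqrt_two_div_two_lt_maxS1 {ε : Fin 2 → Fin 2 → ℝ}
    (hε : ∀ k i, ε k i ∈ Set.Icc (0 : ℝ) (1 / 2)) (h : maxS0 ε < (3 - √2) / 2) :
    ∃ p : Fin 2 → Fin 2 → ℝ, (∀ i j, p i j ∈ Set.Icc (0 : ℝ) (1 / 2)) ∧ ELFP p ε ∧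
      √2 / 2 < maxS1 p := by
  obtain ⟨ζ, ζ', hζ, hζ', hK⟩ := exists_frechet_abs_one_sub_sub_lt hε h
  obtain ⟨ν, hν, htot, h₀₀, h₀₁, h₁₀, h₁₁, hpar⟩ := exists_law_parity hζ hζ'
  have hE := ELFP_of_law_parity hν htot h₀₀ h₀₁ h₁₀ h₁₁
  rw [hpar] at hE
  refine ⟨_, fun i j => ?_, hE, ?_⟩
  · fin_cases i <;> fin_cases j <;> simp
    exact ⟨by positivity, by linarith [Real.one_lt_sqrt_two]⟩
  · calc √2 / 2
        < Sval ![![1 / 2, 1 / 2], ![1 / 2, |1 - ζ - ζ'| / 2]] ![![true, true], ![true, false]] := by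
          simp [Sval, Fin.sum_univ_two]
          linarith
      _ ≤ _ := Sval_le_maxS1 _ (by decide)

/-- the Force set for the quantum ("quant") constraint:
every `p ∈ [0,1/2]⁴` compatible with `ε` satisfies `max S₁p ≤ √2/2` iff
`max S₀ε ≥ (3 − √2)/2`. -/
theorem force_quant
    (ε : Fin 2 → Fin 2 → ℝ)
    (hε : ∀ k i, ε k i ∈ Set.Icc (0 : ℝ) (1 / 2)) :
    (∀ p : Fin 2 → Fin 2 → ℝ, (∀ i j, p i j ∈ Set.Icc (0 : ℝ) (1 / 2)) →
        ELFP p ε → maxS1 p ≤ Real.sqrt 2 / 2) ↔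
      (3 - Real.sqrt 2) / 2 ≤ maxS0 ε := by
  constructor
  · intro hforce
    by_contra! hlt
    obtain ⟨p, hp, hE, hgt⟩ := exists_ELFP_sqrt_two_div_two_lt_maxS1 hε hlt
    exact (hforce p hp hE).not_gt hgt
  · intro hmax p _ hE
    linarith [maxS1_add_maxS0_le_of_ELFP hE]
end
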